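/- arXiv:1904.09272 — 3 statements merged into one kernel-verified Lean document; each statement's English description precedes it below -/
import Mathlib

section
/- Let R be a ring with an element ϖ, and let A, A₁, A₂ be ϖ-adically complete, ϖ-torsion-free R-algebras together with ring maps φᵢ : A → Aᵢ such that A/ϖA = A₁/ϖA₁ = A₂/ϖA₂ = S and each φᵢ reduces to the identity of S modulo ϖ. Then the completed tensor product A₁ ⊗̂_A A₂ (the inverse limit of (A₁/ϖⁿ) ⊗_{A/ϖⁿ} (A₂/ϖⁿ)) is ϖ-torsion free. -/
/-!
STATEMENT 3: Let `R` be a ring with an element `ϖ`, and `A, A₁, A₂` be ϖ-adically complete,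
ϖ-torsion-free `R`-algebras with maps `φᵢ : A → Aᵢ` inducing isomorphisms modulo ϖ.
Then the completed tensor product `A₁ ⊗̂_A A₂ = lim_n (A₁/ϖⁿ) ⊗_{A/ϖⁿ} (A₂/ϖⁿ)` is
ϖ-torsion free.  (The limit is encoded as compatible families; torsion-freeness says a
compatible family killed by ϖ vanishes.  Note `(A₁/ϖⁿ) ⊗_{A/ϖⁿ} (A₂/ϖⁿ) = (A₁/ϖⁿ) ⊗_A (A₂/ϖⁿ)`.)
-/

open TensorProduct

section
variable {R A A₁ A₂ : Type*} [CommRing R] [CommRing A] [CommRing A₁] [CommRing A₂]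
    [Algebra R A] [Algebra R A₁] [Algebra R A₂]
    (φ₁ : A →ₐ[R] A₁) (φ₂ : A →ₐ[R] A₂) (ϖ : R)

lemma ctpt_surj
    (s1 : ∀ b : A₁, ∃ a : A, b - φ₁ a ∈ Ideal.span {algebraMap R A₁ ϖ}) :
    ∀ (n : ℕ) (b : A₁), ∃ a : A, b - φ₁ a ∈ Ideal.span {algebraMap R A₁ ϖ ^ (n + 1)} := by
  intro n
  induction n with
  | zero => simpa using s1
  | succ n ih =>
    intro b
    obtain ⟨a, ha⟩ := ih b
    rw [Ideal.mem_span_singleton] at ha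
    obtain ⟨c, hc⟩ := ha
    obtain ⟨a', ha'⟩ := s1 c
    rw [Ideal.mem_span_singleton] at ha'
    obtain ⟨d, hd⟩ := ha'
    refine ⟨a + algebraMap R A ϖ ^ (n + 1) * a', ?_⟩
    rw [Ideal.mem_span_singleton]
    refine ⟨d, ?_⟩
    have h1 : φ₁ (a + algebraMap R A ϖ ^ (n + 1) * a')
        = φ₁ a + algebraMap R A₁ ϖ ^ (n + 1) * φ₁ a' := by
      rw [map_add, map_mul, map_pow, AlgHom.commutes]
    rw [h1]
    linear_combination hc + (algebraMap R A₁ ϖ) ^ (n + 1) * hd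

lemma ctpt_inj
    (tA1 : Function.Injective fun a : A₁ => algebraMap R A₁ ϖ * a)
    (m1 : ∀ a : A, φ₁ a ∈ Ideal.span {algebraMap R A₁ ϖ} → a ∈ Ideal.span {algebraMap R A ϖ}) :
    ∀ (n : ℕ) (a : A), φ₁ a ∈ Ideal.span {algebraMap R A₁ ϖ ^ (n + 1)} →
      a ∈ Ideal.span {algebraMap R A ϖ ^ (n + 1)} := by
  intro n
  induction n with
  | zero => simpa using m1
  | succ n ih =>
    intro a ha
    rw [Ideal.mem_span_singleton] at ha
    obtain ⟨c, hc⟩ := ha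
    have h1 : a ∈ Ideal.span {algebraMap R A ϖ} := by
      apply m1
      rw [Ideal.mem_span_singleton, hc]
      exact ⟨algebraMap R A₁ ϖ ^ (n + 1) * c, by ring⟩
    rw [Ideal.mem_span_singleton] at h1
    obtain ⟨a', ha'⟩ := h1
    have h2 : φ₁ a' = algebraMap R A₁ ϖ ^ (n + 1) * c := by
      apply tA1
      show algebraMap R A₁ ϖ * φ₁ a' = _
      have h : φ₁ a = algebraMap R A₁ ϖ * φ₁ a' := by
        rw [ha', map_mul, AlgHom.commutes]
      rw [← h, hc]; ring
    have h3 := ih a' (by rw [Ideal.mem_span_singleton, h2]; exact ⟨c, rfl⟩)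
    rw [Ideal.mem_span_singleton] at h3 ⊢
    obtain ⟨d, hd⟩ := h3
    exact ⟨d, by rw [ha', hd]; ring⟩

end

theorem completed_tensor_product_torsionFree
    {R A A₁ A₂ : Type*} [CommRing R] [CommRing A] [CommRing A₁] [CommRing A₂]
    [Algebra R A] [Algebra R A₁] [Algebra R A₂]
    (φ₁ : A →ₐ[R] A₁) (φ₂ : A →ₐ[R] A₂) (ϖ : R)
    -- ϖ-adic completeness
    (hA : IsAdicComplete (Ideal.span {algebraMap R A ϖ}) A)
    (hA1 : IsAdicComplete (Ideal.span {algebraMap R A₁ ϖ}) A₁)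
    (hA2 : IsAdicComplete (Ideal.span {algebraMap R A₂ ϖ}) A₂)
    -- ϖ-torsion-freeness
    (tA : Function.Injective fun a : A => algebraMap R A ϖ * a)
    (tA1 : Function.Injective fun a : A₁ => algebraMap R A₁ ϖ * a)
    (tA2 : Function.Injective fun a : A₂ => algebraMap R A₂ ϖ * a)
    -- φᵢ is an isomorphism modulo ϖ (reduces to the identity of S = A/ϖA)
    (m1 : ∀ a : A, φ₁ a ∈ Ideal.span {algebraMap R A₁ ϖ} → a ∈ Ideal.span {algebraMap R A ϖ})
    (s1 : ∀ b : A₁, ∃ a : A, b - φ₁ a ∈ Ideal.span {algebraMap R A₁ ϖ})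
    (m2 : ∀ a : A, φ₂ a ∈ Ideal.span {algebraMap R A₂ ϖ} → a ∈ Ideal.span {algebraMap R A ϖ})
    (s2 : ∀ b : A₂, ∃ a : A, b - φ₂ a ∈ Ideal.span {algebraMap R A₂ ϖ}) :
    -- view A₁, A₂ as A-algebras via φ₁, φ₂
    letI : Algebra A A₁ := φ₁.toRingHom.toAlgebra
    letI : Algebra A A₂ := φ₂.toRingHom.toAlgebra
    let J₁ : ℕ → Ideal A₁ := fun n => Ideal.span {algebraMap R A₁ ϖ ^ (n + 1)}
    let J₂ : ℕ → Ideal A₂ := fun n => Ideal.span {algebraMap R A₂ ϖ ^ (n + 1)}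
    -- the n-th level of the completed tensor product
    let B : ℕ → Type _ := fun n => (A₁ ⧸ J₁ n) ⊗[A] (A₂ ⧸ J₂ n)
    -- the transition maps of the inverse system
    ∀ trans : ∀ n : ℕ, B (n + 1) →ₐ[A] B n,
      (∀ (n : ℕ) (x : A₁) (y : A₂),
        trans n ((Ideal.Quotient.mk (J₁ (n + 1)) x) ⊗ₜ[A] (Ideal.Quotient.mk (J₂ (n + 1)) y))
          = (Ideal.Quotient.mk (J₁ n) x) ⊗ₜ[A] (Ideal.Quotient.mk (J₂ n) y)) →
      -- ϖ-torsion-freeness of the inverse limit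
      ∀ b : ∀ n : ℕ, B n, (∀ n, trans n (b (n + 1)) = b n) →
        (∀ n, algebraMap R A ϖ • b n = 0) → ∀ n, b n = 0 := by
  intro J₁ J₂ B trans htrans b hcomp htor n
  letI : Algebra A A₁ := φ₁.toRingHom.toAlgebra
  letI : Algebra A A₂ := φ₂.toRingHom.toAlgebra
  set m := n + 1 with hm
  -- every element of B m is 1 ⊗ y
  have hrep : ∀ z : B m, ∃ y : A₂ ⧸ J₂ m, z = (1 : A₁ ⧸ J₁ m) ⊗ₜ[A] y := by
    intro z
    induction z using TensorProduct.induction_on with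
    | zero => exact ⟨0, (tmul_zero _ _).symm⟩
    | tmul x y =>
      obtain ⟨u, hu⟩ := Ideal.Quotient.mk_surjective x
      obtain ⟨a, ha⟩ := ctpt_surj φ₁ ϖ s1 m u
      have hx : x = algebraMap A (A₁ ⧸ J₁ m) a := by
        rw [← hu]
        show Ideal.Quotient.mk (J₁ m) u = Ideal.Quotient.mk (J₁ m) (φ₁ a)
        exact Ideal.Quotient.eq.mpr ha
      refine ⟨a • y, ?_⟩
      rw [hx, Algebra.algebraMap_eq_smul_one, TensorProduct.smul_tmul]
    | add u v hu hv =>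
      obtain ⟨yu, hyu⟩ := hu
      obtain ⟨yv, hyv⟩ := hv
      exact ⟨yu + yv, by rw [hyu, hyv, tmul_add]⟩
  -- the retraction π : B m → A₂ ⧸ J₂ m
  set Jm : Ideal A := Ideal.span {algebraMap R A ϖ ^ (m + 1)} with hJm
  have hle1 : Jm ≤ (J₁ m).comap φ₁.toRingHom := by
    rw [hJm, Ideal.span_le]
    rintro x rfl
    simp only [SetLike.mem_coe, Ideal.mem_comap, AlgHom.toRingHom_eq_coe, RingHom.coe_coe,
      map_pow, AlgHom.commutes]
    exact Ideal.mem_span_singleton_self _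
  have hle2 : Jm ≤ (J₂ m).comap φ₂.toRingHom := by
    rw [hJm, Ideal.span_le]
    rintro x rfl
    simp only [SetLike.mem_coe, Ideal.mem_comap, AlgHom.toRingHom_eq_coe, RingHom.coe_coe,
      map_pow, AlgHom.commutes]
    exact Ideal.mem_span_singleton_self _
  have hq1bij : Function.Bijective (Ideal.quotientMap (J₁ m) φ₁.toRingHom hle1) := by
    constructor
    · exact Ideal.quotientMap_injective' (fun a ha => ctpt_inj φ₁ ϖ tA1 m1 m a ha)
    · intro z
      obtain ⟨u, hu⟩ := Ideal.Quotient.mk_surjective z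
      obtain ⟨a, ha⟩ := ctpt_surj φ₁ ϖ s1 m u
      refine ⟨Ideal.Quotient.mk Jm a, ?_⟩
      rw [Ideal.quotientMap_mk, ← hu]
      exact (Ideal.Quotient.eq.mpr ha).symm
  set e : (A ⧸ Jm) ≃+* (A₁ ⧸ J₁ m) :=
    RingEquiv.ofBijective (Ideal.quotientMap (J₁ m) φ₁.toRingHom hle1) hq1bij with he
  have he_mk : ∀ a : A, e (Ideal.Quotient.mk Jm a) = Ideal.Quotient.mk (J₁ m) (φ₁ a) := by
    intro a
    show Ideal.quotientMap (J₁ m) φ₁.toRingHom hle1 (Ideal.Quotient.mk Jm a) = _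
    rw [Ideal.quotientMap_mk]; rfl
  have halg1 : ∀ a : A, algebraMap A (A₁ ⧸ J₁ m) a = Ideal.Quotient.mk (J₁ m) (φ₁ a) := fun a => rfl
  have halg2 : ∀ a : A, algebraMap A (A₂ ⧸ J₂ m) a = Ideal.Quotient.mk (J₂ m) (φ₂ a) := fun a => rfl
  set f : (A₁ ⧸ J₁ m) →ₐ[A] (A₂ ⧸ J₂ m) :=
    { toRingHom := (Ideal.quotientMap (J₂ m) φ₂.toRingHom hle2).comp e.symm.toRingHom
      commutes' := by
        intro a
        have h1 : algebraMap A (A₁ ⧸ J₁ m) a = e (Ideal.Quotient.mk Jm a) := by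
          rw [he_mk, halg1]
        show (Ideal.quotientMap (J₂ m) φ₂.toRingHom hle2) (e.symm (algebraMap A (A₁ ⧸ J₁ m) a)) = _
        rw [h1, RingEquiv.symm_apply_apply, Ideal.quotientMap_mk, halg2]
        rfl } with hf
  set π : B m →ₐ[A] (A₂ ⧸ J₂ m) :=
    Algebra.TensorProduct.lift f (AlgHom.id A _) (fun x y => Commute.all _ _) with hπdef
  have hπ : ∀ y : A₂ ⧸ J₂ m, π ((1 : A₁ ⧸ J₁ m) ⊗ₜ[A] y) = y := by
    intro y
    rw [hπdef, Algebra.TensorProduct.lift_tmul, map_one, one_mul]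
    rfl
  -- extract x
  obtain ⟨y, hy⟩ := hrep (b m)
  obtain ⟨x, hx⟩ := Ideal.Quotient.mk_surjective y
  have ht : algebraMap R A ϖ • y = 0 := by
    have h := congrArg π (htor m)
    rw [map_smul, map_zero, hy, hπ] at h
    exact h
  have hmem : algebraMap R A₂ ϖ * x ∈ J₂ m := by
    rw [← Ideal.Quotient.eq_zero_iff_mem]
    have : (Ideal.Quotient.mk (J₂ m)) (algebraMap R A₂ ϖ * x) = algebraMap R A ϖ • y := by
      rw [← hx, Algebra.smul_def, halg2, ← map_mul]
      congr 1
      rw [AlgHom.commutes]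
    rw [this, ht]
  rw [Ideal.mem_span_singleton] at hmem
  obtain ⟨c, hc⟩ := hmem
  have hx2 : x ∈ J₂ n := by
    rw [Ideal.mem_span_singleton]
    refine ⟨c, ?_⟩
    apply tA2
    show algebraMap R A₂ ϖ * x = algebraMap R A₂ ϖ * (algebraMap R A₂ ϖ ^ (n + 1) * c)
    rw [hc]; ring
  have hb1 : b m = (Ideal.Quotient.mk (J₁ m) 1) ⊗ₜ[A] (Ideal.Quotient.mk (J₂ m) x) := by
    rw [hy, ← hx, map_one]
  rw [← hcomp n, hb1, htrans n 1 x, Ideal.Quotient.eq_zero_iff_mem.mpr hx2, tmul_zero]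
end

section
/- Let K be a complete nonarchimedean field, f ∈ K⟨t₁,…,t_m⟩ an overconvergent power series with Gauss norm ‖f‖₁ ≤ 1, and ρ > 1. Then there exists λ > 1 such that for every g ∈ 𝔗₁(ρ), the composite g∘f = ∑ⱼ bⱼ f^j converges in 𝔗_m(λ). Consequently substitution t ↦ f defines a ring homomorphism 𝔗₁(ρ) → 𝔗_m(λ). -/
/-!
The `λ`-Gauss norm of `f` is log-convex in `λ`: interpolating the bounds `‖a_I‖ ≤ 1` and
`‖a_I‖ ρ₀^|I| ≤ M` gives `‖a_I‖ (ρ₀^θ)^|I| ≤ M^θ`, which is `≤ ρ` for small `θ > 0`.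
So some `λ' > 1` has `‖f‖_λ' ≤ ρ`, and the Gauss norm being submultiplicative in the
ultrametric setting, `‖bⱼ fʲ‖_λ' ≤ |bⱼ| ρʲ`, which tends to `0`. Hence `∑ bⱼ fʲ` converges
coefficientwise with `‖g ∘ f‖_λ' < ∞`, and lies in `𝔗_m(λ)` for every `1 < λ < λ'`.
Multiplicativity is the Cauchy product formula, valid because in a complete ultrametric ring
every family tending to `0` is summable.
-/

open MvPowerSeries Filter

/-- Membership in `𝔗ₙ(ρ)`. -/
def MemT {K : Type*} [NontriviallyNormedField K] (n : ℕ) (ρ : ℝ)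
    (f : MvPowerSeries (Fin n) K) : Prop :=
  Tendsto (fun I : Fin n →₀ ℕ => ‖coeff I f‖ * ρ ^ (I.sum fun _ k => k))
    cofinite (nhds 0)

/-- The ρ-Gauss norm. -/
noncomputable def gaussNormAt {K : Type*} [NontriviallyNormedField K] {n : ℕ} (ρ : ℝ)
    (f : MvPowerSeries (Fin n) K) : ℝ :=
  ⨆ I : Fin n →₀ ℕ, ‖coeff I f‖ * ρ ^ (I.sum fun _ k => k)

/-- The composite `g ∘ f = ∑ⱼ bⱼ fʲ`, defined coefficientwise by convergent series. -/
noncomputable def subst {K : Type*} [NontriviallyNormedField K] {m : ℕ}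
    (g : PowerSeries K) (f : MvPowerSeries (Fin m) K) : MvPowerSeries (Fin m) K :=
  fun I => ∑' j : ℕ, PowerSeries.coeff j g * coeff I (f ^ j)

open Topology Finset.HasAntidiagonal

theorem Finsupp.tendsto_degree_cofinite_atTop {σ : Type*} [Finite σ] :
    Tendsto (Finsupp.degree : (σ →₀ ℕ) → ℕ) cofinite atTop :=
  tendsto_atTop.2 fun n => eventually_cofinite.2 <| by
    simpa only [not_le] using Finsupp.finite_of_degree_lt n

theorem Real.mul_rpow_le_rpow_of_le_one {a b M θ : ℝ} (ha₀ : 0 ≤ a) (ha₁ : a ≤ 1) (hb : 0 ≤ b)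
    (hab : a * b ≤ M) (hθ₀ : 0 ≤ θ) (hθ₁ : θ ≤ 1) : a * b ^ θ ≤ M ^ θ :=
  calc a * b ^ θ ≤ a ^ θ * b ^ θ := by
        gcongr; exact Real.self_le_rpow_of_le_one ha₀ ha₁ hθ₁
    _ = (a * b) ^ θ := (Real.mul_rpow ha₀ hb).symm
    _ ≤ M ^ θ := by gcongr

section Ultrametric

variable {R : Type*} [NormedRing R] [IsUltrametricDist R] [CompleteSpace R]

theorem summable_mul_prod_of_ultrametric {α β : Type*} {a : α → R} {b : β → R}
    (ha : Summable a) (hb : Summable b) : Summable fun p : α × β => a p.1 * b p.2 :=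
  NonarchimedeanAddGroup.summable_of_tendsto_cofinite_zero <|
    tendsto_mul_cofinite_nhds_zero ha.tendsto_cofinite_zero hb.tendsto_cofinite_zero

theorem summable_sum_mul_antidiagonal_of_ultrametric {a b : ℕ → R} (ha : Summable a)
    (hb : Summable b) : Summable fun n => ∑ kl ∈ antidiagonal n, a kl.1 * b kl.2 :=
  summable_sum_mul_antidiagonal_of_summable_mul (summable_mul_prod_of_ultrametric ha hb)

theorem tsum_mul_tsum_eq_tsum_sum_antidiagonal_of_ultrametric {a b : ℕ → R} (ha : Summable a)
    (hb : Summable b) :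
    (∑' n, a n) * ∑' n, b n = ∑' n, ∑ kl ∈ antidiagonal n, a kl.1 * b kl.2 :=
  ha.tsum_mul_tsum_eq_tsum_sum_antidiagonal hb (summable_mul_prod_of_ultrametric ha hb)

end Ultrametric

section GaussNorm

variable {σ R : Type*} [NormedRing R]

/-- `‖p‖_λ ≤ A`; unlike `gaussNormAt lam p ≤ A`, this is not satisfied vacuously when the
supremum is infinite (where `⨆` takes the junk value `0`). -/
def GaussNormLE (lam : ℝ) (p : MvPowerSeries σ R) (A : ℝ) : Prop :=
  ∀ I, ‖coeff I p‖ * lam ^ I.degree ≤ A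

namespace GaussNormLE

variable {lam A B : ℝ} {p q : MvPowerSeries σ R}

theorem nonneg (h : GaussNormLE lam p A) : 0 ≤ A :=
  (norm_nonneg (coeff 0 p)).trans (by simpa using h 0)

theorem of_lam_le (h : GaussNormLE lam p A) {lam' : ℝ} (hlam'₀ : 0 ≤ lam') (hlam' : lam' ≤ lam) :
    GaussNormLE lam' p A :=
  fun I => le_trans (by gcongr) (h I)

theorem norm_coeff_le (h : GaussNormLE lam p A) (hlam : 0 < lam) (I : σ →₀ ℕ) :
    ‖coeff I p‖ ≤ A / lam ^ I.degree :=
  (le_div_iff₀ (by positivity)).2 (h I)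

theorem mul [IsUltrametricDist R] (hp : GaussNormLE lam p A) (hq : GaussNormLE lam q B)
    (hlam : 0 < lam) : GaussNormLE lam (p * q) (A * B) := by
  classical
  intro I
  rw [coeff_mul, ← le_div_iff₀ (by positivity)]
  refine IsUltrametricDist.norm_sum_le_of_forall_le_of_nonneg
    (div_nonneg (mul_nonneg hp.nonneg hq.nonneg) (by positivity)) fun JJ' hJJ' => ?_
  rw [mem_antidiagonal] at hJJ'
  calc ‖coeff JJ'.1 p * coeff JJ'.2 q‖ ≤ ‖coeff JJ'.1 p‖ * ‖coeff JJ'.2 q‖ := norm_mul_le _ _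
    _ ≤ A / lam ^ JJ'.1.degree * (B / lam ^ JJ'.2.degree) :=
        mul_le_mul (hp.norm_coeff_le hlam _) (hq.norm_coeff_le hlam _) (norm_nonneg _)
          (div_nonneg hp.nonneg (by positivity))
    _ = A * B / lam ^ I.degree := by
        rw [div_mul_div_comm, ← pow_add, ← map_add, hJJ']

theorem pow [IsUltrametricDist R] [NormOneClass R] (h : GaussNormLE lam p A) (hlam : 0 < lam) :
    ∀ j : ℕ, GaussNormLE lam (p ^ j) (A ^ j)
  | 0 => fun I => by
      classical
      rcases eq_or_ne I 0 with rfl | hI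
      · simp
      · simp [coeff_one, hI]
  | j + 1 => by simpa only [pow_succ] using (h.pow hlam j).mul h hlam

end GaussNormLE

theorem exists_one_lt_gaussNormLE {ρ₀ M ρ : ℝ} {f : MvPowerSeries σ R} (hρ₀ : 1 < ρ₀)
    (hM : GaussNormLE ρ₀ f M) (h₁ : GaussNormLE 1 f 1) (hρ : 1 < ρ) :
    ∃ lam, 1 < lam ∧ GaussNormLE lam f ρ := by
  -- `M' ≠ 0`, so `θ ↦ M' ^ θ` is continuous at `0` (`0 ^ 0 = 1` but `0 ^ θ = 0` for `θ > 0`)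
  set M' := max M 1
  have hM' : Tendsto (fun θ : ℝ => M' ^ θ) (𝓝[>] 0) (𝓝 1) := by
    have := (Real.continuousAt_const_rpow (b := 0) (by positivity : M' ≠ 0)).tendsto
    rw [Real.rpow_zero] at this
    exact this.mono_left nhdsWithin_le_nhds
  obtain ⟨θ, hθρ, hθ₀, hθ₁⟩ :=
    ((hM'.eventually (gt_mem_nhds hρ)).and (Ioc_mem_nhdsGT one_pos)).exists
  refine ⟨ρ₀ ^ θ, Real.one_lt_rpow hρ₀ hθ₀, fun I => ?_⟩
  have hcoeff : ‖coeff I f‖ ≤ 1 := by simpa using h₁ I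
  calc ‖coeff I f‖ * (ρ₀ ^ θ) ^ I.degree = ‖coeff I f‖ * (ρ₀ ^ I.degree) ^ θ := by
        rw [← Real.rpow_natCast, ← Real.rpow_natCast, ← Real.rpow_mul (by positivity),
          ← Real.rpow_mul (by positivity), mul_comm θ]
    _ ≤ M ^ θ := Real.mul_rpow_le_rpow_of_le_one (norm_nonneg _) hcoeff (by positivity) (hM I)
        hθ₀.le hθ₁
    _ ≤ M' ^ θ := Real.rpow_le_rpow hM.nonneg (le_max_left _ _) hθ₀.le
    _ ≤ ρ := hθρ.le

end GaussNorm

theorem MemT.exists_gaussNormLE {K : Type*} [NontriviallyNormedField K] {n : ℕ} {ρ : ℝ}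
    {p : MvPowerSeries (Fin n) K} (h : MemT n ρ p) : ∃ M, GaussNormLE ρ p M := by
  obtain ⟨M, hM⟩ := h.bddAbove_range_of_cofinite
  exact ⟨M, fun I => hM ⟨I, rfl⟩⟩

theorem gaussNormLE_of_gaussNormAt_le {K : Type*} [NontriviallyNormedField K] {n : ℕ}
    {ρ M A : ℝ} {p : MvPowerSeries (Fin n) K} (hM : GaussNormLE ρ p M)
    (h : gaussNormAt ρ p ≤ A) : GaussNormLE ρ p A :=
  fun I => (le_ciSup (f := fun I : Fin n →₀ ℕ => ‖coeff I p‖ * ρ ^ I.degree)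
    ⟨M, Set.forall_mem_range.2 hM⟩ I).trans h

theorem memT_of_gaussNormLE {K : Type*} [NontriviallyNormedField K] {n : ℕ} {lam lam' C : ℝ}
    {p : MvPowerSeries (Fin n) K} (hp : GaussNormLE lam' p C) (hlam : 0 ≤ lam)
    (hlt : lam < lam') : MemT n lam p := by
  have hlam' : 0 < lam' := hlam.trans_lt hlt
  have hdecay : Tendsto (fun I : Fin n →₀ ℕ => C * (lam / lam') ^ I.degree) cofinite (𝓝 0) := by
    simpa using ((tendsto_pow_atTop_nhds_zero_of_lt_one (by positivity)
      ((div_lt_one hlam').2 hlt)).comp Finsupp.tendsto_degree_cofinite_atTop).const_mul C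
  refine squeeze_zero (fun I => by positivity) (fun I => ?_) hdecay
  calc ‖coeff I p‖ * lam ^ I.degree ≤ C / lam' ^ I.degree * lam ^ I.degree := by
        gcongr; exact hp.norm_coeff_le hlam' I
    _ = C * (lam / lam') ^ I.degree := by rw [div_pow]; ring

theorem PowerSeries.coeff_mul_mul_coeff_pow {σ R : Type*} [CommSemiring R] [DecidableEq σ]
    (g g' : PowerSeries R) (f : MvPowerSeries σ R) (n : ℕ) (I : σ →₀ ℕ) :
    coeff n (g * g') * MvPowerSeries.coeff I (f ^ n) =
      ∑ JJ' ∈ antidiagonal I, ∑ kl ∈ antidiagonal n,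
        coeff kl.1 g * MvPowerSeries.coeff JJ'.1 (f ^ kl.1) *
          (coeff kl.2 g' * MvPowerSeries.coeff JJ'.2 (f ^ kl.2)) := by
  rw [Finset.sum_comm, coeff_mul, Finset.sum_mul]
  refine Finset.sum_congr rfl fun kl hkl => ?_
  rw [mem_antidiagonal] at hkl
  rw [← hkl, pow_add, MvPowerSeries.coeff_mul, Finset.mul_sum]
  exact Finset.sum_congr rfl fun _ _ => by ring

def SubstSummable {σ K : Type*} [NormedRing K] (g : PowerSeries K) (f : MvPowerSeries σ K) :
    Prop :=
  ∀ I, Summable fun j => PowerSeries.coeff j g * coeff I (f ^ j)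

section Substitution

variable {K : Type*} [NontriviallyNormedField K] {m : ℕ} {f : MvPowerSeries (Fin m) K}

theorem coeff_subst_eq_tsum (g : PowerSeries K) (I : Fin m →₀ ℕ) :
    coeff I (_root_.subst g f) = ∑' j, PowerSeries.coeff j g * coeff I (f ^ j) :=
  rfl

theorem subst_one (f : MvPowerSeries (Fin m) K) : _root_.subst 1 f = 1 := by
  ext I
  rw [coeff_subst_eq_tsum, tsum_eq_single 0 fun j hj => by simp [PowerSeries.coeff_one, hj]]
  simp

theorem subst_add {g g' : PowerSeries K} (hg : SubstSummable g f) (hg' : SubstSummable g' f) :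
    _root_.subst (g + g') f = _root_.subst g f + _root_.subst g' f := by
  ext I
  simp only [coeff_subst_eq_tsum, map_add, add_mul]
  exact (hg I).tsum_add (hg' I)

theorem subst_mul [IsUltrametricDist K] [CompleteSpace K] {g g' : PowerSeries K}
    (hg : SubstSummable g f) (hg' : SubstSummable g' f) :
    _root_.subst (g * g') f = _root_.subst g f * _root_.subst g' f := by
  classical
  ext I
  rw [coeff_subst_eq_tsum]
  calc ∑' n, PowerSeries.coeff n (g * g') * coeff I (f ^ n)
      = ∑' n, ∑ JJ' ∈ antidiagonal I, ∑ kl ∈ antidiagonal n,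
          PowerSeries.coeff kl.1 g * coeff JJ'.1 (f ^ kl.1) *
            (PowerSeries.coeff kl.2 g' * coeff JJ'.2 (f ^ kl.2)) :=
        tsum_congr fun n => PowerSeries.coeff_mul_mul_coeff_pow g g' f n I
    _ = ∑ JJ' ∈ antidiagonal I, ∑' n, ∑ kl ∈ antidiagonal n,
          PowerSeries.coeff kl.1 g * coeff JJ'.1 (f ^ kl.1) *
            (PowerSeries.coeff kl.2 g' * coeff JJ'.2 (f ^ kl.2)) :=
        Summable.tsum_finsetSum fun JJ' _ => summable_sum_mul_antidiagonal_of_ultrametric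
          (a := fun k => PowerSeries.coeff k g * coeff JJ'.1 (f ^ k))
          (b := fun l => PowerSeries.coeff l g' * coeff JJ'.2 (f ^ l)) (hg JJ'.1) (hg' JJ'.2)
    _ = ∑ JJ' ∈ antidiagonal I,
          coeff JJ'.1 (_root_.subst g f) * coeff JJ'.2 (_root_.subst g' f) :=
        Finset.sum_congr rfl fun JJ' _ => (tsum_mul_tsum_eq_tsum_sum_antidiagonal_of_ultrametric
          (a := fun k => PowerSeries.coeff k g * coeff JJ'.1 (f ^ k))
          (b := fun l => PowerSeries.coeff l g' * coeff JJ'.2 (f ^ l)) (hg JJ'.1) (hg' JJ'.2)).symm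
    _ = coeff I (_root_.subst g f * _root_.subst g' f) := (coeff_mul _ _ _).symm

variable [IsUltrametricDist K] {lam ρ : ℝ}

theorem norm_coeff_mul_coeff_pow_le (hf : GaussNormLE lam f ρ) (hlam : 0 < lam)
    (g : PowerSeries K) (j : ℕ) (I : Fin m →₀ ℕ) :
    ‖PowerSeries.coeff j g * coeff I (f ^ j)‖ ≤
      ‖PowerSeries.coeff j g‖ * ρ ^ j / lam ^ I.degree := by
  rw [norm_mul, mul_div_assoc]
  gcongr
  exact (hf.pow hlam j).norm_coeff_le hlam I

theorem substSummable_of_tendsto [CompleteSpace K] (hf : GaussNormLE lam f ρ) (hlam : 0 < lam)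
    {g : PowerSeries K} (hg : Tendsto (fun j => ‖PowerSeries.coeff j g‖ * ρ ^ j) atTop (𝓝 0)) :
    SubstSummable g f := fun I =>
  NonarchimedeanAddGroup.summable_of_tendsto_cofinite_zero <| by
    rw [Nat.cofinite_eq_atTop]
    exact squeeze_zero_norm (norm_coeff_mul_coeff_pow_le hf hlam g · I)
      (by simpa using hg.div_const (lam ^ I.degree))

theorem exists_gaussNormLE_subst (hf : GaussNormLE lam f ρ) (hlam : 0 < lam)
    {g : PowerSeries K} (hg : Tendsto (fun j => ‖PowerSeries.coeff j g‖ * ρ ^ j) atTop (𝓝 0)) :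
    ∃ C, GaussNormLE lam (_root_.subst g f) C := by
  obtain ⟨C, hC⟩ := (Nat.cofinite_eq_atTop ▸ hg).bddAbove_range_of_cofinite
  have hC₀ : 0 ≤ C := (norm_nonneg _).trans (by simpa using hC ⟨0, rfl⟩)
  refine ⟨C, fun I => (le_div_iff₀ (by positivity)).1 ?_⟩
  refine IsUltrametricDist.norm_tsum_le_of_forall_le_of_nonneg (by positivity) fun j => ?_
  exact (norm_coeff_mul_coeff_pow_le hf hlam g j I).trans (by gcongr; exact hC ⟨j, rfl⟩)

end Substitution

theorem substitution_into_overconvergent_series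
    {K : Type*} [NontriviallyNormedField K] [CompleteSpace K]
    (hna : ∀ x y : K, ‖x + y‖ ≤ max ‖x‖ ‖y‖) (m : ℕ)
    (f : MvPowerSeries (Fin m) K)
    (hover : ∃ ρ₀ : ℝ, 1 < ρ₀ ∧ MemT m ρ₀ f)
    (hnorm : gaussNormAt 1 f ≤ 1) (ρ : ℝ) (hρ : 1 < ρ) :
    ∃ lam : ℝ, 1 < lam ∧
      ∀ g : PowerSeries K,
        Tendsto (fun j : ℕ => ‖PowerSeries.coeff j g‖ * ρ ^ j) atTop (nhds 0) →
        -- the series ∑ⱼ bⱼ fʲ converges coefficientwise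
        (∀ I : Fin m →₀ ℕ, Summable fun j : ℕ =>
          PowerSeries.coeff j g * coeff I (f ^ j)) ∧
        -- the composite lies in 𝔗_m(λ)
        MemT m lam (_root_.subst g f) ∧
        -- substitution is a ring homomorphism 𝔗₁(ρ) → 𝔗_m(λ)
        _root_.subst (1 : PowerSeries K) f = 1 ∧
        (∀ g' : PowerSeries K,
          Tendsto (fun j : ℕ => ‖PowerSeries.coeff j g'‖ * ρ ^ j) atTop (nhds 0) →
          _root_.subst (g + g') f = _root_.subst g f + _root_.subst g' f ∧
          _root_.subst (g * g') f = _root_.subst g f * _root_.subst g' f) := by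
  have : IsUltrametricDist K := IsUltrametricDist.isUltrametricDist_of_isNonarchimedean_norm hna
  obtain ⟨ρ₀, hρ₀, hf⟩ := hover
  obtain ⟨M, hM⟩ := hf.exists_gaussNormLE
  have h₁ : GaussNormLE 1 f 1 :=
    gaussNormLE_of_gaussNormAt_le (hM.of_lam_le zero_le_one hρ₀.le) hnorm
  obtain ⟨lam, hlam, hflam⟩ := exists_one_lt_gaussNormLE hρ₀ hM h₁ hρ
  have hlam₀ : 0 < lam := by linarith
  refine ⟨(1 + lam) / 2, by linarith, fun g hg => ?_⟩
  have hsum := fun g : PowerSeries K => substSummable_of_tendsto (g := g) hflam hlam₀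
  obtain ⟨C, hC⟩ := exists_gaussNormLE_subst hflam hlam₀ hg
  exact ⟨hsum g hg, memT_of_gaussNormLE hC (by linarith) (by linarith), subst_one f,
    fun g' hg' => ⟨subst_add (hsum g hg) (hsum g' hg'), subst_mul (hsum g hg) (hsum g' hg')⟩⟩
end

section
/- Let A be a K-affinoid (or dagger) algebra and consider the two-term complex A⟨t⟩ →^{∂/∂t} A⟨t⟩ in the pro-system over radii: more precisely, for the pro-object {R_η}_{0<η<1} with R_η = colim_{ρ>1} A_ρ⟨t/η⟩†, the map ∂/∂t : {R_η} → {R_η} is surjective as a map of pro-objects (any f ∈ R_η has an antiderivative in R_{η'} for any η < η' < 1), and its kernel is A. -/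
/-!
STATEMENT 16: Let `A` be a `K`-affinoid (dagger) algebra (char 0) and consider the pro-system
`{R_η}_{0<η<1}`, where `R_η` consists of the power series over `A` converging on the disk of
radius η.  The map `∂/∂t : {R_η} → {R_η}` is surjective as a map of pro-objects
(any `f ∈ R_η` has an antiderivative one level down, i.e. in `R_{η'}` for any `0 < η' < η`),
and its kernel is `A` (the constants).
-/

open PowerSeries Filter

/-- Membership in `R_η`: power series over `A` converging on the disk of radius η. -/
def RMem {A : Type*} [NormedCommRing A] (η : ℝ) (f : PowerSeries A) : Prop :=
  Tendsto (fun j : ℕ => ‖PowerSeries.coeff j f‖ * η ^ j) atTop (nhds 0)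

/-!
In a normed field of characteristic zero, `‖1 / n‖` grows at most polynomially in `n`: by
Ostrowski's theorem the norm restricted to `ℚ` is a power of the trivial, the real or a `p`-adic
absolute value, and `|n|_p ≥ 1 / n`. Dividing the `m`-th coefficient by `m + 1` therefore costs a
polynomial factor, which the geometric factor `(η' / η) ^ m` absorbs, so the termwise antiderivative
converges one level down. The kernel consists of the constants because over an additively
torsion-free ring a power series is determined by its derivative and its constant coefficient.
-/

theorem padicNorm.inv_natCast_le (p : ℕ) [Fact p.Prime] {n : ℕ} (hn : n ≠ 0) :
    (n : ℚ)⁻¹ ≤ padicNorm p n := by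
  rw [padicNorm.eq_zpow_of_nonzero (by exact_mod_cast hn), padicValRat.of_nat, zpow_neg,
    zpow_natCast]
  refine inv_anti₀ (pow_pos (by exact_mod_cast (Fact.out : p.Prime).pos) _) ?_
  exact_mod_cast Nat.le_of_dvd (Nat.pos_of_ne_zero hn) pow_padicValNat_dvd

namespace Rat.AbsoluteValue

theorem exists_inv_apply_natCast_le_pow (f : AbsoluteValue ℚ ℝ) :
    ∃ k : ℕ, ∀ n : ℕ, n ≠ 0 → (f n)⁻¹ ≤ (n : ℝ) ^ k := by
  by_cases hf : f.IsNontrivial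
  · rcases equiv_real_or_padic f hf with hreal | ⟨p, ⟨_, hpadic⟩, -⟩
    · obtain ⟨c, hc, hfc⟩ := exists_nat_rpow_iff_isEquiv.mpr hreal
      refine ⟨0, fun n hn => ?_⟩
      have hn1 : (1 : ℝ) ≤ n := by exact_mod_cast Nat.one_le_iff_ne_zero.mpr hn
      have hfn : 1 ≤ f n := by
        by_contra! h
        have := Real.rpow_lt_one (f.nonneg _) h hc
        rw [hfc n, real_eq_abs, Nat.abs_cast, Rat.cast_natCast] at this
        linarith
      simpa using inv_le_one_of_one_le₀ hfn
    · obtain ⟨c, hc, hfc⟩ := exists_nat_rpow_iff_isEquiv.mpr hpadic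
      obtain ⟨k, hk⟩ := exists_nat_gt c⁻¹
      refine ⟨k, fun n hn => ?_⟩
      have hn1 : (1 : ℝ) ≤ n := by exact_mod_cast Nat.one_le_iff_ne_zero.mpr hn
      have hfn : 0 < f n := f.pos (by exact_mod_cast hn)
      rw [← Real.rpow_le_rpow_iff (by positivity) (by positivity) hc, Real.inv_rpow hfn.le, hfc n]
      calc (padic p n)⁻¹ ≤ n := by
            have h := Rat.cast_le (K := ℝ) |>.mpr (padicNorm.inv_natCast_le p hn)
            push_cast at h
            rwa [inv_le_comm₀ (hfc n ▸ Real.rpow_pos_of_pos hfn c) (by positivity),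
              padic_eq_padicNorm]
        _ ≤ ((n : ℝ) ^ k) ^ c := by
            rw [← Real.rpow_natCast, ← Real.rpow_mul (by positivity)]
            refine Real.self_le_rpow_of_one_le hn1 ?_
            rw [inv_lt_iff_one_lt_mul₀ hc] at hk
            linarith
  · exact ⟨0, fun n hn => by simp [f.not_isNontrivial_apply hf (Nat.cast_ne_zero.mpr hn)]⟩

end Rat.AbsoluteValue

def NormedField.absoluteValueRat (K : Type*) [NormedField K] [CharZero K] :
    AbsoluteValue ℚ ℝ where
  toFun q := ‖(q : K)‖
  map_mul' _ _ := by simp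
  nonneg' _ := norm_nonneg _
  eq_zero' _ := by simp
  add_le' _ _ := by simpa using norm_add_le _ _

theorem exists_norm_natCast_inv_le_pow (K : Type*) [NormedField K] [CharZero K] :
    ∃ k : ℕ, ∀ n : ℕ, n ≠ 0 → ‖(n : K)‖⁻¹ ≤ (n : ℝ) ^ k := by
  simpa [NormedField.absoluteValueRat] using
    Rat.AbsoluteValue.exists_inv_apply_natCast_le_pow (NormedField.absoluteValueRat K)

namespace PowerSeries

variable (K : Type*) {A : Type*} [Field K] [CommRing A] [Algebra K A]

noncomputable def antiderivative (f : A⟦X⟧) : A⟦X⟧ :=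
  mk fun n => match n with
    | 0 => 0
    | m + 1 => ((m + 1 : ℕ) : K)⁻¹ • coeff m f

variable {K}

theorem coeff_antiderivative_succ (f : A⟦X⟧) (m : ℕ) :
    coeff (m + 1) (antiderivative K f) = ((m + 1 : ℕ) : K)⁻¹ • coeff m f := by
  simp [antiderivative]

theorem derivative_antiderivative [CharZero K] (f : A⟦X⟧) :
    d⁄dX A (antiderivative K f) = f := by
  ext m
  have hm : ((m + 1 : ℕ) : K) ≠ 0 := Nat.cast_ne_zero.mpr m.succ_ne_zero
  rw [coeff_derivative, coeff_antiderivative_succ, ← Nat.cast_succ, Algebra.smul_def,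
    mul_right_comm, ← map_natCast (algebraMap K A), ← map_mul, inv_mul_cancel₀ hm, map_one,
    one_mul]

theorem eq_C_constantCoeff_of_derivative_eq_zero {R : Type*} [CommRing R] [IsAddTorsionFree R]
    {f : R⟦X⟧} (hf : d⁄dX R f = 0) : f = C (constantCoeff f) :=
  derivative.ext (by rw [hf, derivative_C]) (by rw [constantCoeff_C])

end PowerSeries

open Topology in
theorem RMem.antiderivative {K A : Type*} [NormedField K] [CharZero K] [NormedCommRing A]
    [NormedAlgebra K A] {η η' : ℝ} {f : A⟦X⟧} (hf : RMem η f) (hη' : 0 < η') (hη'η : η' < η) :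
    RMem η' (antiderivative K f) := by
  obtain ⟨k, hk⟩ := exists_norm_natCast_inv_le_pow K
  have hη : 0 < η := hη'.trans hη'η
  have hr : Tendsto (fun m : ℕ => ((m : ℝ) + 1) ^ k * (η' / η) ^ (m + 1)) atTop (𝓝 0) := by
    simpa using (tendsto_add_atTop_iff_nat 1).mpr (tendsto_pow_const_mul_const_pow_of_lt_one k
      (by positivity) ((div_lt_one hη).mpr hη'η))
  rw [RMem, ← tendsto_add_atTop_iff_nat 1]
  refine squeeze_zero (fun m => by positivity) (fun m => ?_)
    (by simpa using (hr.mul hf).const_mul η)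
  calc ‖coeff (m + 1) (PowerSeries.antiderivative K f)‖ * η' ^ (m + 1)
      ≤ ((m : ℝ) + 1) ^ k * ‖coeff m f‖ * η' ^ (m + 1) := by
        rw [coeff_antiderivative_succ]
        gcongr
        refine (norm_smul_le _ _).trans ?_
        rw [norm_inv]
        gcongr
        exact_mod_cast hk _ m.succ_ne_zero
    _ = η * (((m : ℝ) + 1) ^ k * (η' / η) ^ (m + 1) * (‖coeff m f‖ * η ^ m)) := by
        rw [div_pow, pow_succ η]
        field_simp

theorem derivative_pro_surjective_kernel_constants_general
    {K A : Type*} [NontriviallyNormedField K] [CharZero K]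
    [NormedCommRing A] [NormedAlgebra K A] :
    -- pro-surjectivity of ∂/∂t: antiderivatives exist one level down
    (∀ η : ℝ, 0 < η → η < 1 → ∀ f : PowerSeries A, RMem η f →
      ∀ η' : ℝ, 0 < η' → η' < η →
        ∃ g : PowerSeries A, RMem η' g ∧ PowerSeries.derivativeFun g = f) ∧
    -- the kernel of ∂/∂t is A (the constant power series)
    (∀ η : ℝ, 0 < η → η < 1 → ∀ f : PowerSeries A, RMem η f →
      PowerSeries.derivativeFun f = 0 → ∃ a : A, f = PowerSeries.C a) := by
  have : IsAddTorsionFree A := IsAddTorsionFree.of_isTorsionFree K A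
  refine ⟨fun η _ _ f hf η' hη' hη'η => ?_, fun _ _ _ f _ hf => ?_⟩
  · exact ⟨antiderivative K f, hf.antiderivative hη' hη'η, derivative_antiderivative f⟩
  · exact ⟨constantCoeff f, eq_C_constantCoeff_of_derivative_eq_zero hf⟩

theorem derivative_pro_surjective_kernel_constants
    {K A : Type*} [NontriviallyNormedField K] [CharZero K]
    [NormedCommRing A] [NormedAlgebra K A] [CompleteSpace A] [Nontrivial A]
    (hna : ∀ x y : A, ‖x + y‖ ≤ max ‖x‖ ‖y‖) :
    -- pro-surjectivity of ∂/∂t: antiderivatives exist one level down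
    (∀ η : ℝ, 0 < η → η < 1 → ∀ f : PowerSeries A, RMem η f →
      ∀ η' : ℝ, 0 < η' → η' < η →
        ∃ g : PowerSeries A, RMem η' g ∧ PowerSeries.derivativeFun g = f) ∧
    -- the kernel of ∂/∂t is A (the constant power series)
    (∀ η : ℝ, 0 < η → η < 1 → ∀ f : PowerSeries A, RMem η f →
      PowerSeries.derivativeFun f = 0 → ∃ a : A, f = PowerSeries.C a) :=
  derivative_pro_surjective_kernel_constants_general (K := K)
end
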